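/- Let (X,μ) be a good Cantor measure space and I an invariant ideal on X with μ-measurable base. If I contains a set of positive μ-measure, then I contains every nowhere dense subset of X. -/

import Mathlib

open MeasureTheory Set TopologicalSpace

/-!
Inside a measurable member of the ideal with positive measure pick a closed set `K` with
`0 < μ K`, and cut `X` into finitely many clopen pieces of measure less than `μ K`. Every piece
of the closure of a nowhere dense set is a closed nowhere dense set `F` with `μ F < μ K`, and it
suffices to find a measure-preserving homeomorphism `h` with `F ⊆ h '' K`.

The homeomorphism is built by a back-and-forth argument. We keep two clopen partitions of `X`
indexed by common labels, such that partner pieces `P` and `Q` have equal measure and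
`μ (F ∩ Q) < μ (K ∩ P)` whenever `F` meets `Q`. Atomlessness and the Subset Condition allow us
to split either piece of a pair along a clopen set and to split its partner so that the invariant
survives; on the side of `Q` this needs `F` to be nowhere dense, so that `F` never fills a
piece. After refining both sides along a countable clopen basis, `h x` is the unique point
carrying the same labels as `x`. The pieces generate the Borel sets, so `h` preserves `μ`; and
every neighbourhood of `h⁻¹ y`, `y ∈ F`, contains a piece whose partner meets `F`, hence a point
of `K`.
-/

section MeasureReal

variable {X : Type*} [MeasurableSpace X] {μ : Measure X}

lemma measureReal_le_of_nonempty_imp_lt {E : Set X} {a : ℝ} (ha : 0 ≤ a)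
    (h : E.Nonempty → μ.real E < a) : μ.real E ≤ a := by
  rcases E.eq_empty_or_nonempty with rfl | hne
  · simpa using ha
  · exact (h hne).le

variable [IsFiniteMeasure μ]

lemma exists_subset_measureReal_inter_biUnion_mem_Ioo (G : Set X) {t δ : ℝ} (ht : 0 ≤ t)
    (𝒜 : Finset (Set X)) (h𝒜 : ∀ A ∈ 𝒜, μ.real A < δ)
    (htG : t < μ.real (G ∩ ⋃ A ∈ 𝒜, A)) :
    ∃ 𝒜' ⊆ 𝒜, μ.real (G ∩ ⋃ A ∈ 𝒜', A) ∈ Ioo t (t + δ) := by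
  classical
  induction 𝒜 using Finset.induction_on with
  | empty => simp at htG; linarith
  | insert A 𝒜 _ ih =>
    by_cases h : t < μ.real (G ∩ ⋃ B ∈ 𝒜, B)
    · obtain ⟨𝒜', h𝒜', h⟩ := ih (fun B hB => h𝒜 B (Finset.mem_insert_of_mem hB)) h
      exact ⟨𝒜', h𝒜'.trans (Finset.subset_insert A 𝒜), h⟩
    refine ⟨insert A 𝒜, subset_rfl, htG, ?_⟩
    rw [Finset.set_biUnion_insert]
    calc μ.real (G ∩ (A ∪ ⋃ B ∈ 𝒜, B)) ≤ μ.real (A ∪ G ∩ ⋃ B ∈ 𝒜, B) :=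
          measureReal_mono fun x ⟨hxG, hx⟩ => hx.imp id (⟨hxG, ·⟩)
      _ ≤ μ.real A + μ.real (G ∩ ⋃ B ∈ 𝒜, B) := measureReal_union_le _ _
      _ < t + δ := by linarith [h𝒜 A (Finset.mem_insert_self A 𝒜), not_lt.1 h]

lemma measureReal_inter_inter_add_inter_sdiff (K V : Set X) {E : Set X} (hE : MeasurableSet E) :
    μ.real (K ∩ (V ∩ E)) + μ.real (K ∩ (V \ E)) = μ.real (K ∩ V) := by
  rw [← inter_assoc, ← inter_sdiff_assoc, measureReal_inter_add_sdiff hE]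

end MeasureReal

section ClopenApproximation

variable {X : Type*} [TopologicalSpace X] [CompactSpace X] [T2Space X]
  [TotallyDisconnectedSpace X] [MeasurableSpace X] {μ : Measure X} [IsFiniteMeasure μ]
  [μ.OuterRegular]

lemma exists_isClopen_between_measureReal_lt {C U : Set X} (hC : IsClosed C) (hU : IsOpen U)
    (hCU : C ⊆ U) {s : ℝ} (hs : μ.real C < s) :
    ∃ D, IsClopen D ∧ C ⊆ D ∧ D ⊆ U ∧ μ.real D < s := by
  obtain ⟨O, hCO, hO, hμO⟩ :=
    C.exists_isOpen_lt_of_lt _ ((ENNReal.lt_ofReal_iff_toReal_lt (measure_ne_top μ C)).2 hs)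
  obtain ⟨D, hD, hCD, hDO⟩ :=
    exists_clopen_of_closed_subset_open hC (hO.inter hU) (subset_inter hCO hCU)
  exact ⟨D, hD, hCD, hDO.trans inter_subset_right,
    ENNReal.toReal_lt_of_lt_ofReal ((measure_mono (hDO.trans inter_subset_left)).trans_lt hμO)⟩

variable [NullSingletonClass μ]

lemma exists_isClopen_cover_measureReal_lt {δ : ℝ} (hδ : 0 < δ) :
    ∃ 𝒜 : Finset (Set X), (∀ A ∈ 𝒜, IsClopen A ∧ μ.real A < δ) ∧ ⋃ A ∈ 𝒜, A = univ := by
  have hsmall (x : X) : ∃ A, IsClopen A ∧ x ∈ A ∧ μ.real A < δ := by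
    obtain ⟨A, hA, hxA, -, hμA⟩ := exists_isClopen_between_measureReal_lt (μ := μ) (s := δ)
      isClosed_singleton isOpen_univ (subset_univ {x}) (by simpa [measureReal_def] using hδ)
    exact ⟨A, hA, hxA rfl, hμA⟩
  choose A hA hxA hμA using hsmall
  obtain ⟨t, -, ht⟩ :=
    isCompact_univ.elim_nhds_subcover A fun x _ => (hA x).isOpen.mem_nhds (hxA x)
  refine ⟨t.image A, by simpa using fun x _ => ⟨hA x, hμA x⟩, ?_⟩
  rw [Finset.set_biUnion_finset_image]
  exact univ_subset_iff.1 ht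

lemma exists_isClopen_subset_lt_measureReal_inter {G V : Set X} (hG : IsClosed G)
    (hV : IsClopen V) {t s : ℝ} (ht : 0 ≤ t) (htG : t < μ.real (G ∩ V)) (hts : t < s) :
    ∃ E, IsClopen E ∧ E ⊆ V ∧ t < μ.real (G ∩ E) ∧ μ.real E < s := by
  obtain ⟨𝒜, h𝒜, h𝒜X⟩ := exists_isClopen_cover_measureReal_lt (μ := μ) (sub_pos.2 hts)
  obtain ⟨𝒜', h𝒜'𝒜, hlt, hgt⟩ := exists_subset_measureReal_inter_biUnion_mem_Ioo (G ∩ V) ht 𝒜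
    (fun A hA => (h𝒜 A hA).2) (by rwa [h𝒜X, inter_univ])
  set U := V ∩ ⋃ A ∈ 𝒜', A
  have hU : IsClopen U :=
    hV.inter (𝒜'.finite_toSet.isClopen_biUnion fun A hA => (h𝒜 A (h𝒜'𝒜 hA)).1)
  have hGU : G ∩ U = G ∩ V ∩ ⋃ A ∈ 𝒜', A := (inter_assoc _ _ _).symm
  obtain ⟨E, hE, hGE, hEU, hμE⟩ := exists_isClopen_between_measureReal_lt
    (hG.inter hU.isClosed) hU.isOpen inter_subset_right (s := s) (by rw [hGU]; linarith)
  refine ⟨E, hE, hEU.trans inter_subset_left, hlt.trans_le ?_, hμE⟩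
  rw [← hGU]
  exact measureReal_mono (subset_inter inter_subset_left hGE)

variable [OpensMeasurableSpace X]

lemma exists_isClopen_subset_lt_measureReal_inter_of_add_lt {K V : Set X} (hK : IsClosed K)
    (hV : IsClopen V) {t r s : ℝ} (ht : 0 ≤ t) (hr : 0 ≤ r) (htr : t + r < μ.real (K ∩ V))
    (hts : t < s) :
    ∃ E, IsClopen E ∧ E ⊆ V ∧ t < μ.real (K ∩ E) ∧ μ.real E < s ∧ r < μ.real (K ∩ (V \ E)) := by
  obtain ⟨E, hE, hEV, htE, hμE⟩ := exists_isClopen_subset_lt_measureReal_inter hK hV ht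
    (by linarith) (lt_min hts (by linarith : t < μ.real (K ∩ V) - r))
  refine ⟨E, hE, hEV, htE, hμE.trans_le (min_le_left _ _), ?_⟩
  have hsplit := measureReal_inter_inter_add_inter_sdiff (μ := μ) K V hE.isOpen.measurableSet
  rw [inter_eq_right.2 hEV] at hsplit
  linarith [min_le_right s (μ.real (K ∩ V) - r),
    measureReal_mono (μ := μ) (inter_subset_right : K ∩ E ⊆ E)]

lemma exists_isClopen_split_of_measureReal_inter_lt {G Q : Set X} (hG : IsClosed G)
    (hQ : IsClopen Q) {a b : ℝ} (hab : (G ∩ Q).Nonempty → μ.real (G ∩ Q) < a + b) :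
    ∃ E C, IsClopen E ∧ IsClopen C ∧ E ⊆ Q ∧ C ⊆ Q \ E ∧ G ∩ Q ⊆ E ∪ C ∧
      (E.Nonempty → μ.real E < a) ∧ (C.Nonempty → μ.real C < b) := by
  rcases (G ∩ Q).eq_empty_or_nonempty with hGQ | hGQ
  · exact ⟨∅, ∅, isClopen_empty, isClopen_empty, empty_subset _, empty_subset _,
      hGQ.trans_subset (empty_subset _), by simp, by simp⟩
  have hGQ' := hab hGQ
  by_cases ha : μ.real (G ∩ Q) < a
  · obtain ⟨E, hE, hGE, hEQ, hμE⟩ :=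
      exists_isClopen_between_measureReal_lt (hG.inter hQ.isClosed) hQ.isOpen inter_subset_right ha
    exact ⟨E, ∅, hE, isClopen_empty, hEQ, empty_subset _, hGE.trans subset_union_left,
      fun _ => hμE, by simp⟩
  by_cases hb : μ.real (G ∩ Q) < b
  · obtain ⟨C, hC, hGC, hCQ, hμC⟩ :=
      exists_isClopen_between_measureReal_lt (hG.inter hQ.isClosed) hQ.isOpen inter_subset_right hb
    exact ⟨∅, C, isClopen_empty, hC, empty_subset _, by simpa using hCQ,
      hGC.trans subset_union_right, by simp, fun _ => hμC⟩
  -- `E` takes a share of `G ∩ Q` of measure in `(μ (G ∩ Q) - b, a)`, `C` covers the rest.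
  obtain ⟨E, hE, hEQ, hGE, hμE⟩ := exists_isClopen_subset_lt_measureReal_inter hG hQ
    (t := μ.real (G ∩ Q) - b) (s := a) (by linarith) (by linarith) (by linarith)
  have hsplit := measureReal_inter_inter_add_inter_sdiff (μ := μ) G Q hE.isOpen.measurableSet
  rw [inter_eq_right.2 hEQ] at hsplit
  obtain ⟨C, hC, hGC, hCQ, hμC⟩ := exists_isClopen_between_measureReal_lt
    (hG.inter (hQ.diff hE).isClosed) (hQ.diff hE).isOpen inter_subset_right (s := b)
    (by linarith)
  refine ⟨E, C, hE, hC, hEQ, hCQ, fun x hx => ?_, fun _ => hμE, fun _ => hμC⟩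
  by_cases hxE : x ∈ E
  exacts [Or.inl hxE, Or.inr (hGC ⟨hx.1, hx.2, hxE⟩)]

end ClopenApproximation

lemma measureReal_inter_lt_of_interior_eq_empty {X : Type*} [TopologicalSpace X]
    [MeasurableSpace X] [OpensMeasurableSpace X] {μ : Measure X} [IsFiniteMeasure μ]
    [μ.IsOpenPosMeasure] {F U : Set X} (hF : IsClosed F) (hFi : interior F = ∅) (hU : IsOpen U)
    (hne : U.Nonempty) : μ.real (F ∩ U) < μ.real U := by
  have hUF : (U \ F).Nonempty := by
    refine nonempty_of_not_subset fun hUF => hne.ne_empty ?_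
    exact subset_empty_iff.1 (hFi ▸ interior_maximal hUF hU)
  have hpos : 0 < μ.real (U \ F) :=
    ENNReal.toReal_pos ((hU.sdiff hF).measure_ne_zero μ hUF) (measure_ne_top μ _)
  rw [inter_comm]
  linarith [measureReal_inter_add_sdiff (μ := μ) (s := U) hF.measurableSet]

section SubsetCondition

variable {X : Type*} [TopologicalSpace X] [MeasurableSpace X] {μ : Measure X}

def SubsetCondition (μ : Measure X) : Prop :=
  ∀ U V : Set X, IsClopen U → IsClopen V → μ U < μ V → ∃ W, W ⊆ V ∧ IsClopen W ∧ μ W = μ U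

variable [IsFiniteMeasure μ]

lemma SubsetCondition.exists_isClopen_subset_measureReal_eq (hsc : SubsetCondition μ)
    {U V : Set X} (hU : IsClopen U) (hV : IsClopen V) (h : μ.real U < μ.real V) :
    ∃ W ⊆ V, IsClopen W ∧ μ.real W = μ.real U := by
  obtain ⟨W, hWV, hW, hμW⟩ :=
    hsc U V hU hV ((ENNReal.toReal_lt_toReal (measure_ne_top μ U) (measure_ne_top μ V)).1 h)
  exact ⟨W, hWV, hW, by rw [measureReal_def, measureReal_def, hμW]⟩

variable [OpensMeasurableSpace X]

lemma SubsetCondition.exists_isClopen_between_measureReal_eq (hsc : SubsetCondition μ)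
    {E R T : Set X} (hE : IsClopen E) (hR : IsClopen R) (hT : IsClopen T) (hER : E ⊆ R)
    (hET : μ.real E ≤ μ.real T) (hTR : μ.real T ≤ μ.real R) :
    ∃ W, IsClopen W ∧ E ⊆ W ∧ W ⊆ R ∧ μ.real W = μ.real T := by
  rcases hET.eq_or_lt with hET | hET
  · exact ⟨E, hE, subset_rfl, hER, hET⟩
  rcases hTR.eq_or_lt with hTR | hTR
  · exact ⟨R, hR, hER, subset_rfl, hTR.symm⟩
  -- Removing a copy of `E` from `T` leaves a clopen set of measure `μ T - μ E`; a copy of that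
  -- placed in `R \ E` completes `E`.
  obtain ⟨E', hE'T, hE', hμE'⟩ := hsc.exists_isClopen_subset_measureReal_eq hE hT hET
  have hμD : μ.real (T \ E') = μ.real T - μ.real E := by
    rw [measureReal_sdiff hE'T hE'.isOpen.measurableSet, hμE']
  obtain ⟨Z, hZ, hZ', hμZ⟩ := hsc.exists_isClopen_subset_measureReal_eq (hT.diff hE')
    (hR.diff hE) (by rw [hμD, measureReal_sdiff hER hE.isOpen.measurableSet]; linarith)
  refine ⟨E ∪ Z, hE.union hZ', subset_union_left, union_subset hER (hZ.trans sdiff_subset), ?_⟩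
  rw [measureReal_union (disjoint_sdiff_right.mono_right hZ) hZ'.isOpen.measurableSet, hμZ, hμD]
  ring

end SubsetCondition

section GoodPair

variable {X : Type*} [TopologicalSpace X] [MeasurableSpace X] {μ : Measure X} {K F P Q : Set X}

/-- `P` and `Q` are partner pieces: the homeomorphism under construction maps `P` onto `Q`, and
`K ∩ P` keeps room for the preimage of `F ∩ Q`. -/
structure IsGoodPair (μ : Measure X) (K F P Q : Set X) : Prop where
  isClopen_left : IsClopen P
  isClopen_right : IsClopen Q
  measureReal_eq : μ.real P = μ.real Q
  measureReal_lt : (F ∩ Q).Nonempty → μ.real (F ∩ Q) < μ.real (K ∩ P)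

lemma IsGoodPair.exists_split_right_of_subset [OpensMeasurableSpace X] [IsFiniteMeasure μ]
    (hPQ : IsGoodPair μ K F P Q) (hsc : SubsetCondition μ) {B E₁ E₂ : Set X} (hB : IsClopen B)
    (hE₁ : IsClopen E₁) (hE₂ : IsClopen E₂) (hE₁P : E₁ ⊆ P) (hE₂P : E₂ ⊆ P \ E₁)
    (hμE₁ : μ.real E₁ ≤ μ.real (Q ∩ B)) (hμE₂ : μ.real E₂ ≤ μ.real (Q \ B))
    (hKE₁ : (F ∩ (Q ∩ B)).Nonempty → μ.real (F ∩ (Q ∩ B)) < μ.real (K ∩ E₁))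
    (hKE₂ : (F ∩ (Q \ B)).Nonempty → μ.real (F ∩ (Q \ B)) < μ.real (K ∩ E₂)) :
    ∃ P₁, IsGoodPair μ K F (P ∩ P₁) (Q ∩ B) ∧ IsGoodPair μ K F (P \ P₁) (Q \ B) := by
  have hP := hPQ.isClopen_left
  have hQ := hPQ.isClopen_right
  have hQ' := measureReal_inter_add_sdiff (μ := μ) (s := Q) hB.isOpen.measurableSet
  obtain ⟨P₁, hP₁, hE₁P₁, hP₁P, hμP₁⟩ := hsc.exists_isClopen_between_measureReal_eq hE₁
    (hP.diff hE₂) (hQ.inter hB)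
    (subset_sdiff.2 ⟨hE₁P, disjoint_of_subset_right hE₂P disjoint_sdiff_right⟩) hμE₁
    (by rw [measureReal_sdiff (hE₂P.trans sdiff_subset) hE₂.isOpen.measurableSet,
      hPQ.measureReal_eq]; linarith)
  have hP₁P' : P₁ ⊆ P := hP₁P.trans sdiff_subset
  have hE₂P₂ : E₂ ⊆ P \ P₁ := fun x hx => ⟨(hE₂P hx).1, fun hxP₁ => (hP₁P hxP₁).2 hx⟩
  refine ⟨P₁, ⟨hP.inter hP₁, hQ.inter hB, ?_, fun hne => ?_⟩,
    ⟨hP.diff hP₁, hQ.diff hB, ?_, fun hne => ?_⟩⟩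
  · rw [inter_eq_right.2 hP₁P', hμP₁]
  · exact (hKE₁ hne).trans_le
      (measureReal_mono (inter_subset_inter_right _ (subset_inter hE₁P hE₁P₁)))
  · rw [measureReal_sdiff hP₁P' hP₁.isOpen.measurableSet, hPQ.measureReal_eq]
    linarith
  · exact (hKE₂ hne).trans_le (measureReal_mono (inter_subset_inter_right _ hE₂P₂))

variable [CompactSpace X] [T2Space X] [TotallyDisconnectedSpace X] [OpensMeasurableSpace X]
  [IsFiniteMeasure μ] [μ.OuterRegular] [NullSingletonClass μ]

lemma IsGoodPair.exists_split_left (hPQ : IsGoodPair μ K F P Q) (hsc : SubsetCondition μ)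
    (hF : IsClosed F) {B : Set X} (hB : IsClopen B) :
    ∃ Q₁, IsGoodPair μ K F (P ∩ B) (Q ∩ Q₁) ∧ IsGoodPair μ K F (P \ B) (Q \ Q₁) := by
  obtain ⟨hP, hQ, hμPQ, hFK⟩ := hPQ
  obtain ⟨E, C, hE, hC, hEQ, hCQE, hFEC, hμE, hμC⟩ :=
    exists_isClopen_split_of_measureReal_inter_lt hF hQ (a := μ.real (K ∩ (P ∩ B)))
      (b := μ.real (K ∩ (P \ B)))
      (by rw [measureReal_inter_inter_add_inter_sdiff K P hB.isOpen.measurableSet]; exact hFK)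
  have hEP : μ.real E ≤ μ.real (P ∩ B) :=
    (measureReal_le_of_nonempty_imp_lt measureReal_nonneg hμE).trans
      (measureReal_mono inter_subset_right)
  have hCP : μ.real C ≤ μ.real (P \ B) :=
    (measureReal_le_of_nonempty_imp_lt measureReal_nonneg hμC).trans
      (measureReal_mono inter_subset_right)
  have hP' := measureReal_inter_add_sdiff (μ := μ) (s := P) hB.isOpen.measurableSet
  obtain ⟨Q₁, hQ₁, hEQ₁, hQ₁QC, hμQ₁⟩ := hsc.exists_isClopen_between_measureReal_eq hE
    (hQ.diff hC) (hP.inter hB)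
    (subset_sdiff.2 ⟨hEQ, disjoint_of_subset_right hCQE disjoint_sdiff_right⟩) hEP
    (by rw [measureReal_sdiff (hCQE.trans sdiff_subset) hC.isOpen.measurableSet]; linarith)
  have hQ₁Q : Q₁ ⊆ Q := hQ₁QC.trans sdiff_subset
  have hFQ₁ : F ∩ (Q ∩ Q₁) ⊆ E := fun x ⟨hxF, hxQ, hxQ₁⟩ =>
    (hFEC ⟨hxF, hxQ⟩).resolve_right fun hxC => (hQ₁QC hxQ₁).2 hxC
  have hFQ₂ : F ∩ (Q \ Q₁) ⊆ C := fun x ⟨hxF, hxQ, hxQ₁⟩ =>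
    (hFEC ⟨hxF, hxQ⟩).resolve_left fun hxE => hxQ₁ (hEQ₁ hxE)
  refine ⟨Q₁, ⟨hP.inter hB, hQ.inter hQ₁, ?_, fun hne => ?_⟩,
    ⟨hP.diff hB, hQ.diff hQ₁, ?_, fun hne => ?_⟩⟩
  · rw [inter_eq_right.2 hQ₁Q, hμQ₁]
  · exact (measureReal_mono hFQ₁).trans_lt (hμE (hne.mono hFQ₁))
  · rw [measureReal_sdiff hQ₁Q hQ₁.isOpen.measurableSet]
    linarith
  · exact (measureReal_mono hFQ₂).trans_lt (hμC (hne.mono hFQ₂))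

lemma IsGoodPair.exists_split_right [μ.IsOpenPosMeasure] (hPQ : IsGoodPair μ K F P Q)
    (hsc : SubsetCondition μ) (hF : IsClosed F) (hFi : interior F = ∅) (hK : IsClosed K)
    {B : Set X} (hB : IsClopen B) :
    ∃ P₁, IsGoodPair μ K F (P ∩ P₁) (Q ∩ B) ∧ IsGoodPair μ K F (P \ P₁) (Q \ B) := by
  have hP := hPQ.isClopen_left
  have hQ := hPQ.isClopen_right
  have hFQ := measureReal_inter_inter_add_inter_sdiff (μ := μ) F Q hB.isOpen.measurableSet
  have hF_lt {U : Set X} (hU : IsClopen U) (hne : (F ∩ U).Nonempty) : μ.real (F ∩ U) < μ.real U :=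
    measureReal_inter_lt_of_interior_eq_empty hF hFi hU.isOpen (hne.mono inter_subset_right)
  obtain ⟨E₁, hE₁, hE₁P, hKE₁, hμE₁, hrest⟩ : ∃ E₁, IsClopen E₁ ∧ E₁ ⊆ P ∧
      ((F ∩ (Q ∩ B)).Nonempty → μ.real (F ∩ (Q ∩ B)) < μ.real (K ∩ E₁)) ∧
      μ.real E₁ ≤ μ.real (Q ∩ B) ∧
      ((F ∩ (Q \ B)).Nonempty → μ.real (F ∩ (Q \ B)) < μ.real (K ∩ (P \ E₁))) := by
    by_cases h₁ : (F ∩ (Q ∩ B)).Nonempty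
    · obtain ⟨E₁, hE₁, hE₁P, hKE₁, hμE₁, hrest⟩ :=
        exists_isClopen_subset_lt_measureReal_inter_of_add_lt hK hP measureReal_nonneg
          measureReal_nonneg
          (hFQ ▸ hPQ.measureReal_lt (h₁.mono (inter_subset_inter_right _ inter_subset_left)))
          (hF_lt (hQ.inter hB) h₁)
      exact ⟨E₁, hE₁, hE₁P, fun _ => hKE₁, hμE₁.le, fun _ => hrest⟩
    · refine ⟨∅, isClopen_empty, empty_subset _, fun h => absurd h h₁, by simp, fun h₂ => ?_⟩
      rw [sdiff_empty]
      linarith [hPQ.measureReal_lt (h₂.mono (inter_subset_inter_right _ sdiff_subset)),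
        measureReal_nonneg (μ := μ) (s := F ∩ (Q ∩ B))]
  obtain ⟨E₂, hE₂, hE₂P, hKE₂, hμE₂⟩ : ∃ E₂, IsClopen E₂ ∧ E₂ ⊆ P \ E₁ ∧
      ((F ∩ (Q \ B)).Nonempty → μ.real (F ∩ (Q \ B)) < μ.real (K ∩ E₂)) ∧
      μ.real E₂ ≤ μ.real (Q \ B) := by
    by_cases h₂ : (F ∩ (Q \ B)).Nonempty
    · obtain ⟨E₂, hE₂, hE₂P, hKE₂, hμE₂⟩ := exists_isClopen_subset_lt_measureReal_inter hK
        (hP.diff hE₁) measureReal_nonneg (hrest h₂) (hF_lt (hQ.diff hB) h₂)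
      exact ⟨E₂, hE₂, hE₂P, fun _ => hKE₂, hμE₂.le⟩
    · exact ⟨∅, isClopen_empty, empty_subset _, fun h => absurd h h₂, by simp⟩
  exact hPQ.exists_split_right_of_subset hsc hB hE₁ hE₂ hE₁P hE₂P hμE₁ hμE₂ hKE₁ hKE₂

end GoodPair

section Labels

variable {X : Type*}

def IsSaturated (f : X → ℕ) (S : Set X) : Prop :=
  ∀ x x', f x = f x' → (x ∈ S ↔ x' ∈ S)

variable {a : X → ℕ} {S : ℕ → Set X}

open scoped Classical in
noncomputable def splitLabel (a : X → ℕ) (S : ℕ → Set X) (x : X) : ℕ :=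
  2 * a x + if x ∈ S (a x) then 1 else 0

lemma splitLabel_div_two (x : X) : splitLabel a S x / 2 = a x := by
  unfold splitLabel
  split_ifs <;> omega

lemma splitLabel_mod_two_eq_one_iff {x : X} : splitLabel a S x % 2 = 1 ↔ x ∈ S (a x) := by
  unfold splitLabel
  split_ifs with h <;> simp [h]

lemma splitLabel_splitLabel_div_four {T : ℕ → Set X} (x : X) :
    splitLabel (splitLabel a S) T x / 4 = a x := by
  rw [show 4 = 2 * 2 from rfl, ← Nat.div_div_eq_div_mul, splitLabel_div_two, splitLabel_div_two]

lemma isSaturated_splitLabel_const (a : X → ℕ) (B : Set X) :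
    IsSaturated (splitLabel a fun _ => B) B := fun x x' h => by
  rw [← splitLabel_mod_two_eq_one_iff (a := a) (S := fun _ => B),
    ← splitLabel_mod_two_eq_one_iff (a := a) (S := fun _ => B), h]

lemma IsSaturated.splitLabel {B : Set X} (h : IsSaturated a B) (S : ℕ → Set X) :
    IsSaturated (splitLabel a S) B := fun x x' hx =>
  h x x' (by rw [← splitLabel_div_two (a := a) (S := S) x, hx, splitLabel_div_two])

lemma preimage_splitLabel_odd (i : ℕ) : splitLabel a S ⁻¹' {2 * i + 1} = a ⁻¹' {i} ∩ S i := by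
  ext x
  by_cases h : x ∈ S (a x) <;>
    simp only [mem_preimage, mem_singleton_iff, mem_inter_iff, splitLabel, h, if_true, if_false]
  · exact ⟨fun e => ⟨by omega, by rwa [← show a x = i by omega]⟩, fun ⟨e, _⟩ => by rw [e]⟩
  · exact ⟨fun e => by omega, fun ⟨e, h'⟩ => absurd (e ▸ h') h⟩

lemma preimage_splitLabel_even (i : ℕ) : splitLabel a S ⁻¹' {2 * i} = a ⁻¹' {i} \ S i := by
  ext x
  by_cases h : x ∈ S (a x) <;>
    simp only [mem_preimage, mem_singleton_iff, mem_sdiff, splitLabel, h, if_true, if_false]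
  · exact ⟨fun e => by omega, fun ⟨e, h'⟩ => absurd (e ▸ h) h'⟩
  · exact ⟨fun e => ⟨by omega, by rwa [← show a x = i by omega]⟩, fun ⟨e, _⟩ => by rw [e]; rfl⟩

end Labels

section Matching

variable {X : Type*} [TopologicalSpace X] [MeasurableSpace X] {μ : Measure X} {K F : Set X}

def IsMatching (μ : Measure X) (K F : Set X) (a b : X → ℕ) : Prop :=
  ∀ i, IsGoodPair μ K F (a ⁻¹' {i}) (b ⁻¹' {i})

lemma isMatching_const (hFK : μ.real F < μ.real K) :
    IsMatching μ K F (fun _ => 0) (fun _ => 0) := by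
  intro i
  rcases eq_or_ne i 0 with rfl | hi
  · simp only [preimage_const_of_mem (mem_singleton 0)]
    exact ⟨isClopen_univ, isClopen_univ, rfl, fun _ => by simpa using hFK⟩
  · simp only [preimage_const_of_notMem (mt mem_singleton_iff.1 hi.symm)]
    exact ⟨isClopen_empty, isClopen_empty, rfl, fun h => by simp at h⟩

lemma isMatching_splitLabel {a b : X → ℕ} {S T : ℕ → Set X}
    (h : ∀ i, IsGoodPair μ K F (a ⁻¹' {i} ∩ S i) (b ⁻¹' {i} ∩ T i) ∧
      IsGoodPair μ K F (a ⁻¹' {i} \ S i) (b ⁻¹' {i} \ T i)) :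
    IsMatching μ K F (splitLabel a S) (splitLabel b T) := by
  intro j
  obtain ⟨i, rfl | rfl⟩ := Nat.even_or_odd' j
  · rw [preimage_splitLabel_even, preimage_splitLabel_even]
    exact (h i).2
  · rw [preimage_splitLabel_odd, preimage_splitLabel_odd]
    exact (h i).1

lemma mem_of_isMatching {B : ℕ → Set X} (hB : IsTopologicalBasis (range B))
    {a b : ℕ → X → ℕ} (hm : ∀ n, IsMatching μ K F (a n) (b n))
    (hsat : ∀ n, IsSaturated (a (n + 1)) (B n)) (hK : IsClosed K) {x y : X} (hy : y ∈ F)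
    (hxy : ∀ n, b n y = a n x) : x ∈ K := by
  rw [← hK.closure_eq, mem_closure_iff]
  intro o ho hxo
  obtain ⟨_, ⟨n, rfl⟩, hxB, hBo⟩ := hB.exists_subset_of_mem_open hxo ho
  have hFQ : (F ∩ b (n + 1) ⁻¹' {a (n + 1) x}).Nonempty := ⟨y, hy, hxy (n + 1)⟩
  obtain ⟨z, hzK, hz⟩ := nonempty_of_measureReal_ne_zero
    (measureReal_nonneg.trans_lt ((hm (n + 1) _).measureReal_lt hFQ)).ne'
  exact ⟨z, hBo ((hsat n z x hz).2 hxB), hzK⟩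

variable [CompactSpace X] [T2Space X] [TotallyDisconnectedSpace X] [OpensMeasurableSpace X]
  [IsFiniteMeasure μ] [μ.OuterRegular] [NullSingletonClass μ] [μ.IsOpenPosMeasure]

lemma IsMatching.exists_refine {a b : X → ℕ} (hab : IsMatching μ K F a b)
    (hsc : SubsetCondition μ) (hF : IsClosed F) (hFi : interior F = ∅) (hK : IsClosed K)
    {B : Set X} (hB : IsClopen B) :
    ∃ a' b' : X → ℕ, IsMatching μ K F a' b' ∧ (∀ x, a' x / 4 = a x) ∧ (∀ y, b' y / 4 = b y) ∧
      IsSaturated a' B ∧ IsSaturated b' B := by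
  choose T hT using fun i => (hab i).exists_split_left hsc hF hB
  have hab₁ := isMatching_splitLabel (S := fun _ => B) hT
  choose S hS using fun i => (hab₁ i).exists_split_right hsc hF hFi hK hB
  exact ⟨_, _, isMatching_splitLabel hS, splitLabel_splitLabel_div_four,
    splitLabel_splitLabel_div_four, (isSaturated_splitLabel_const a B).splitLabel S,
    isSaturated_splitLabel_const _ B⟩

lemma exists_seq_isMatching (hsc : SubsetCondition μ) (hF : IsClosed F) (hFi : interior F = ∅)
    (hK : IsClosed K) (hFK : μ.real F < μ.real K) {B : ℕ → Set X} (hB : ∀ n, IsClopen (B n)) :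
    ∃ a b : ℕ → X → ℕ, (∀ n, IsMatching μ K F (a n) (b n)) ∧
      (∀ n x, a (n + 1) x / 4 = a n x) ∧ (∀ n y, b (n + 1) y / 4 = b n y) ∧
      (∀ n, IsSaturated (a (n + 1)) (B n)) ∧ (∀ n, IsSaturated (b (n + 1)) (B n)) := by
  let M := {p : (X → ℕ) × (X → ℕ) // IsMatching μ K F p.1 p.2}
  choose a' b' h using fun n (p : M) => p.2.exists_refine hsc hF hFi hK (hB n)
  let c (n : ℕ) : M := Nat.rec ⟨(fun _ => 0, fun _ => 0), isMatching_const hFK⟩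
    (fun n p => ⟨(a' n p, b' n p), (h n p).1⟩) n
  exact ⟨fun n => (c n).1.1, fun n => (c n).1.2, fun n => (c n).2, fun n => (h n (c n)).2.1,
    fun n => (h n (c n)).2.2.1, fun n => (h n (c n)).2.2.2.1, fun n => (h n (c n)).2.2.2.2⟩

end Matching

section Limit

variable {X : Type*} {a b : ℕ → X → ℕ} {g : ℕ → ℕ → ℕ}

lemma label_eq_of_le (hg : ∀ n y, g n (b (n + 1) y) = b n y) {n m : ℕ} (hnm : n ≤ m)
    {y y' : X} (h : b m y = b m y') : b n y = b n y' := by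
  induction m, hnm using Nat.le_induction with
  | base => exact h
  | succ m _ ih => exact ih (by rw [← hg, h, hg])

lemma isPiSystem_fibers (hg : ∀ n y, g n (b (n + 1) y) = b n y) :
    IsPiSystem {S | ∃ n i, b n ⁻¹' {i} = S} := by
  have key {n m : ℕ} (i j : ℕ) (hnm : n ≤ m) (hne : (b n ⁻¹' {i} ∩ b m ⁻¹' {j}).Nonempty) :
      b n ⁻¹' {i} ∩ b m ⁻¹' {j} = b m ⁻¹' {j} := by
    obtain ⟨z, hzi, hzj⟩ := hne
    refine inter_eq_right.2 fun y hy => ?_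
    simp only [mem_preimage, mem_singleton_iff] at hy hzi hzj ⊢
    rw [label_eq_of_le hg hnm (hy.trans hzj.symm), hzi]
  rintro _ ⟨n, i, rfl⟩ _ ⟨m, j, rfl⟩ hne
  rcases le_total n m with hnm | hmn
  · exact ⟨m, j, (key i j hnm hne).symm⟩
  · rw [inter_comm] at hne ⊢
    exact ⟨n, i, (key j i hmn hne).symm⟩

variable [TopologicalSpace X] {B : ℕ → Set X}

lemma eq_of_forall_label_eq [T1Space X] (hB : IsTopologicalBasis (range B))
    (hsat : ∀ n, IsSaturated (b (n + 1)) (B n)) {y y' : X} (h : ∀ n, b n y = b n y') :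
    y = y' := by
  by_contra hne
  obtain ⟨_, ⟨n, rfl⟩, hy, hBn⟩ :=
    hB.exists_subset_of_mem_open (mem_compl_singleton_iff.2 hne) isOpen_compl_singleton
  exact hBn ((hsat n y y' (h (n + 1))).1 hy) rfl

lemma continuous_of_forall_label_eq (hB : IsTopologicalBasis (range B))
    (ha : ∀ n, Continuous (a n)) (hsat : ∀ n, IsSaturated (b (n + 1)) (B n)) {f : X → X}
    (hf : ∀ x n, b n (f x) = a n x) : Continuous f := by
  refine hB.continuous_iff.2 ?_
  rintro _ ⟨n, rfl⟩
  refine isOpen_iff_forall_mem_open.2 fun x hx =>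
    ⟨a (n + 1) ⁻¹' {a (n + 1) x}, fun x' hx' => ?_, (isOpen_discrete _).preimage (ha _), rfl⟩
  exact (hsat n _ _ (by rw [hf, hf]; exact hx')).2 hx

variable [MeasurableSpace X] {μ : Measure X}

lemma exists_forall_label_eq [CompactSpace X] [μ.IsOpenPosMeasure] (ha : ∀ n, Continuous (a n))
    (hb : ∀ n, Continuous (b n)) (hμ : ∀ n i, μ (a n ⁻¹' {i}) = μ (b n ⁻¹' {i}))
    (hga : ∀ n x, g n (a (n + 1) x) = a n x) (hgb : ∀ n y, g n (b (n + 1) y) = b n y) (x : X) :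
    ∃ y, ∀ n, b n y = a n x := by
  have hne (n : ℕ) : (b n ⁻¹' {a n x}).Nonempty := nonempty_of_measure_ne_zero <| by
    rw [← hμ]
    exact ((isOpen_discrete _).preimage (ha n)).measure_ne_zero μ ⟨x, rfl⟩
  obtain ⟨y, hy⟩ := IsCompact.nonempty_iInter_of_sequence_nonempty_isCompact_isClosed
    (fun n => b n ⁻¹' {a n x})
    (fun n y (hy : b (n + 1) y = a (n + 1) x) => show b n y = a n x by rw [← hgb, hy, hga])
    hne ((isClosed_discrete _).preimage (hb 0)).isCompact
    (fun n => (isClosed_discrete _).preimage (hb n))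
  exact ⟨y, mem_iInter.1 hy⟩

lemma measurableSpace_eq_generateFrom_fibers [BorelSpace X] (hB : IsTopologicalBasis (range B))
    (hb : ∀ n, Continuous (b n)) (hsat : ∀ n, IsSaturated (b (n + 1)) (B n)) :
    ‹MeasurableSpace X› = MeasurableSpace.generateFrom {S | ∃ n i, b n ⁻¹' {i} = S} := by
  have := hB.secondCountableTopology (countable_range B)
  refine le_antisymm ?_ (MeasurableSpace.generateFrom_le ?_)
  · rw [BorelSpace.measurable_eq (α := X), hB.borel_eq_generateFrom]
    refine MeasurableSpace.generateFrom_le ?_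
    rintro _ ⟨n, rfl⟩
    have hBn : B n = ⋃ i ∈ b (n + 1) '' B n, b (n + 1) ⁻¹' {i} := by
      rw [biUnion_preimage_singleton]
      exact (subset_preimage_image _ _).antisymm fun y ⟨y', hy', he⟩ => (hsat n y' y he).1 hy'
    rw [hBn]
    exact .biUnion (to_countable _) fun i _ => .basic _ ⟨n + 1, i, rfl⟩
  · rintro _ ⟨n, i, rfl⟩
    exact ((isClosed_discrete _).preimage (hb n)).measurableSet

lemma measurePreserving_of_forall_label_eq [BorelSpace X] [IsFiniteMeasure μ]
    (hB : IsTopologicalBasis (range B)) (hb : ∀ n, Continuous (b n))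
    (hsat : ∀ n, IsSaturated (b (n + 1)) (B n)) (hgb : ∀ n y, g n (b (n + 1) y) = b n y)
    (hμ : ∀ n i, μ (a n ⁻¹' {i}) = μ (b n ⁻¹' {i})) {f : X → X} (hfm : Measurable f)
    (hf : ∀ x n, b n (f x) = a n x) : MeasurePreserving f μ μ := by
  refine ⟨hfm, ext_of_generate_finite _ (measurableSpace_eq_generateFrom_fibers hB hb hsat)
    (isPiSystem_fibers hgb) ?_ ?_⟩
  · rintro _ ⟨n, i, rfl⟩
    rw [Measure.map_apply hfm ((isClosed_discrete _).preimage (hb n)).measurableSet, ← hμ]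
    congr 1
    ext x
    simp [hf]
  · rw [Measure.map_apply hfm MeasurableSet.univ, preimage_univ]

theorem exists_homeomorph_forall_label_eq [CompactSpace X] [T2Space X] [BorelSpace X]
    [IsFiniteMeasure μ] [μ.IsOpenPosMeasure] (hB : IsTopologicalBasis (range B))
    (ha : ∀ n, Continuous (a n)) (hb : ∀ n, Continuous (b n))
    (hμ : ∀ n i, μ (a n ⁻¹' {i}) = μ (b n ⁻¹' {i}))
    (hga : ∀ n x, g n (a (n + 1) x) = a n x) (hgb : ∀ n y, g n (b (n + 1) y) = b n y)
    (hsata : ∀ n, IsSaturated (a (n + 1)) (B n)) (hsatb : ∀ n, IsSaturated (b (n + 1)) (B n)) :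
    ∃ h : X ≃ₜ X, MeasurePreserving h μ μ ∧ ∀ x n, b n (h x) = a n x := by
  choose f hf using exists_forall_label_eq ha hb hμ hga hgb
  choose f' hf' using exists_forall_label_eq hb ha (fun n i => (hμ n i).symm) hgb hga
  have hcont : Continuous f := continuous_of_forall_label_eq hB ha hsatb hf
  let e : X ≃ X :=
    ⟨f, f', fun x => eq_of_forall_label_eq hB hsata fun n => by rw [hf', hf],
      fun y => eq_of_forall_label_eq hB hsatb fun n => by rw [hf, hf']⟩
  exact ⟨hcont.homeoOfEquivCompactToT2 (f := e),
    measurePreserving_of_forall_label_eq hB hb hsatb hgb hμ hcont.measurable hf, hf⟩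

end Limit

lemma exists_seq_isClopen_isTopologicalBasis (X : Type*) [TopologicalSpace X] [CompactSpace X]
    [T2Space X] [TotallyDisconnectedSpace X] [SecondCountableTopology X] :
    ∃ B : ℕ → Set X, (∀ n, IsClopen (B n)) ∧ IsTopologicalBasis (range B) := by
  obtain ⟨𝓑, h𝓑, h𝓑c, h𝓑b⟩ := isTopologicalBasis_isClopen.exists_countable (α := X)
  obtain ⟨B, hB𝓑⟩ := (h𝓑c.insert ∅).exists_eq_range (insert_nonempty _ _)
  refine ⟨B, fun n => ?_, hB𝓑 ▸ h𝓑b.insert_empty⟩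
  rcases (hB𝓑 ▸ mem_range_self n : B n ∈ insert ∅ 𝓑) with h | h
  exacts [h ▸ isClopen_empty, h𝓑 h]

theorem exists_measurePreserving_homeomorph_subset_image {X : Type*} [TopologicalSpace X]
    [CompactSpace X] [T2Space X] [TotallyDisconnectedSpace X] [MetrizableSpace X]
    [MeasurableSpace X] [BorelSpace X] {μ : Measure X} [IsFiniteMeasure μ]
    [NullSingletonClass μ] [μ.IsOpenPosMeasure] (hsc : SubsetCondition μ) {F K : Set X}
    (hF : IsClosed F) (hFi : interior F = ∅) (hK : IsClosed K) (hFK : μ.real F < μ.real K) :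
    ∃ h : X ≃ₜ X, MeasurePreserving h μ μ ∧ F ⊆ h '' K := by
  obtain ⟨B, hBc, hB⟩ := exists_seq_isClopen_isTopologicalBasis X
  obtain ⟨a, b, hm, hga, hgb, hsata, hsatb⟩ := exists_seq_isMatching hsc hF hFi hK hFK hBc
  obtain ⟨h, hh, hlabel⟩ := exists_homeomorph_forall_label_eq hB
    (fun n => continuous_discrete_rng.2 fun i => (hm n i).isClopen_left.isOpen)
    (fun n => continuous_discrete_rng.2 fun i => (hm n i).isClopen_right.isOpen)
    (fun n i => (measureReal_eq_measureReal_iff).1 (hm n i).measureReal_eq)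
    (g := fun _ j => j / 4) hga hgb hsata hsatb
  refine ⟨h, hh, fun y hy => ⟨h.symm y, ?_, h.apply_symm_apply y⟩⟩
  exact mem_of_isMatching hB hm hsata hK hy fun n => by rw [← hlabel, h.apply_symm_apply]

lemma mem_of_isClosed_of_interior_eq_empty {X : Type*} [TopologicalSpace X] [CompactSpace X]
    [T2Space X] [TotallyDisconnectedSpace X] [MetrizableSpace X] [MeasurableSpace X]
    [BorelSpace X] {μ : Measure X} [IsFiniteMeasure μ] [NullSingletonClass μ]
    [μ.IsOpenPosMeasure] (hsc : SubsetCondition μ) {I : Set (Set X)}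
    (hdown : ∀ A ∈ I, ∀ B : Set X, B ⊆ A → B ∈ I)
    (hinv : ∀ h : X ≃ₜ X, (∀ S : Set X, MeasurableSet S → μ (h '' S) = μ S) →
      ∀ A ∈ I, h '' A ∈ I)
    {K F : Set X} (hKI : K ∈ I) (hK : IsClosed K) (hF : IsClosed F) (hFi : interior F = ∅)
    (hFK : μ.real F < μ.real K) : F ∈ I := by
  obtain ⟨h, hh, hFh⟩ := exists_measurePreserving_homeomorph_subset_image hsc hF hFi hK hFK
  refine hdown _ (hinv h (fun S _ => ?_) K hKI) _ hFh
  rw [h.image_eq_preimage_symm]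
  exact (hh.symm h.toMeasurableEquiv).measure_preimage_equiv S

theorem stmt12_general {X : Type*} [TopologicalSpace X] [CompactSpace X] [T2Space X]
    [TopologicalSpace.MetrizableSpace X] [TotallyDisconnectedSpace X]
    [MeasurableSpace X] [BorelSpace X]
    (μ : MeasureTheory.Measure X) [MeasureTheory.IsFiniteMeasure μ]
    (hcont : ∀ x : X, μ {x} = 0)
    (hpos : ∀ U : Set X, IsOpen U → U.Nonempty → 0 < μ U)
    (hsc : ∀ U V : Set X, IsClopen U → IsClopen V → μ U < μ V →
      ∃ W, W ⊆ V ∧ IsClopen W ∧ μ W = μ U)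
    (I : Set (Set X))
    (hdown : ∀ A ∈ I, ∀ B : Set X, B ⊆ A → B ∈ I)
    (hcup : ∀ A ∈ I, ∀ B ∈ I, A ∪ B ∈ I)
    (hinv : ∀ h : X ≃ₜ X, (∀ S : Set X, MeasurableSet S → μ (h '' S) = μ S) →
      ∀ A ∈ I, h '' A ∈ I)
    (hbase : ∀ A ∈ I, ∃ B ∈ I, A ⊆ B ∧ MeasurableSet B)
    (hbig : ∃ A ∈ I, 0 < μ A) :
    ∀ N : Set X, IsNowhereDense N → N ∈ I := by
  have : NullSingletonClass μ := ⟨hcont⟩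
  have : μ.IsOpenPosMeasure := ⟨fun U hU hne => (hpos U hU hne).ne'⟩
  intro N hN
  obtain ⟨A, hAI, hA⟩ := hbig
  obtain ⟨B, hBI, hAB, hB⟩ := hbase A hAI
  obtain ⟨K, hKB, hK, hKpos⟩ :=
    hB.exists_lt_isClosed_of_ne_top (measure_ne_top μ B) (hA.trans_le (measure_mono hAB))
  have hKI : K ∈ I := hdown B hBI K hKB
  obtain ⟨𝒜, h𝒜, h𝒜X⟩ := exists_isClopen_cover_measureReal_lt (μ := μ)
    (ENNReal.toReal_pos hKpos.ne' (measure_ne_top μ K))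
  have hpiece (V : Set X) (hV : V ∈ 𝒜) : closure N ∩ V ∈ I :=
    mem_of_isClosed_of_interior_eq_empty hsc hdown hinv hKI hK
      (isClosed_closure.inter (h𝒜 V hV).1.isClosed)
      (subset_empty_iff.1 (hN ▸ interior_mono inter_subset_left))
      ((measureReal_mono inter_subset_right).trans_lt (h𝒜 V hV).2)
  have hclosure : closure N = 𝒜.sup fun V => closure N ∩ V := by
    rw [Finset.sup_set_eq_biUnion, ← inter_iUnion₂, h𝒜X, inter_univ]
  have hNI : closure N ∈ I :=
    hclosure ▸ Finset.sup_induction (hdown K hKI ∅ (empty_subset K)) hcup hpiece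
  exact hdown _ hNI N subset_closure

/-- An invariant ideal with measurable base containing a set of positive measure
contains every nowhere dense set. -/
theorem stmt12 {X : Type*} [TopologicalSpace X] [CompactSpace X] [T2Space X]
    [TopologicalSpace.MetrizableSpace X] [TotallyDisconnectedSpace X]
    [MeasurableSpace X] [BorelSpace X]
    (μ : MeasureTheory.Measure X) [MeasureTheory.IsFiniteMeasure μ]
    (hperf : ∀ x : X, ¬ IsOpen ({x} : Set X))
    (hcont : ∀ x : X, μ {x} = 0)
    (hpos : ∀ U : Set X, IsOpen U → U.Nonempty → 0 < μ U)
    (hsc : ∀ U V : Set X, IsClopen U → IsClopen V → μ U < μ V →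
      ∃ W, W ⊆ V ∧ IsClopen W ∧ μ W = μ U)
    (I : Set (Set X))
    (hdown : ∀ A ∈ I, ∀ B : Set X, B ⊆ A → B ∈ I)
    (hcup : ∀ A ∈ I, ∀ B ∈ I, A ∪ B ∈ I)
    (hinv : ∀ h : X ≃ₜ X, (∀ S : Set X, MeasurableSet S → μ (h '' S) = μ S) →
      ∀ A ∈ I, h '' A ∈ I)
    (hbase : ∀ A ∈ I, ∃ B ∈ I, A ⊆ B ∧ MeasurableSet B)
    (hbig : ∃ A ∈ I, 0 < μ A) :
    ∀ N : Set X, IsNowhereDense N → N ∈ I :=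
  stmt12_general μ hcont hpos hsc I hdown hcup hinv hbase hbig
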